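/- Every third-order tensor T of size N1 × N2 × N3 with entries in ℂ admits a t-SVD: there exist tensors U of size N1 × N1 × N3, Θ of size N1 × N2 × N3 and V of size N2 × N2 × N3 such that Uᴴ ∗ U = U ∗ Uᴴ = I (the N1 × N1 × N3 identity tensor), Vᴴ ∗ V = V ∗ Vᴴ = I (the N2 × N2 × N3 identity tensor), Θ is f-diagonal (Θ(i,j) is the zero tube whenever i ≠ j), and T = U ∗ Θ ∗ Vᴴ. Moreover Θ can be chosen so that for every frequency k : ZMod N3 and every diagonal index i, (dft Θ(i,i))(k) is a nonnegative real number and these values are nonincreasing in i. -/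

import Mathlib

open scoped BigOperators

/-- Circular convolution of two tubes of length `n`. -/
noncomputable def cconv {n : ℕ} [NeZero n] (a b : ZMod n → ℂ) : ZMod n → ℂ :=
  fun t => ∑ s : ZMod n, a s * b (t - s)

/-- Discrete Fourier transform of a tube of length `n`. -/
noncomputable def dft {n : ℕ} [NeZero n] (a : ZMod n → ℂ) : ZMod n → ℂ :=
  fun k => ∑ t : ZMod n,
    a t * Complex.exp (-2 * (Real.pi : ℂ) * Complex.I * ((k.val : ℂ) * (t.val : ℂ)) / (n : ℂ))

/-- t-product of third-order tensors. -/
noncomputable def tProduct {N1 N2 N3 N4 : ℕ} [NeZero N3]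
    (A : Fin N1 → Fin N2 → ZMod N3 → ℂ) (B : Fin N2 → Fin N4 → ZMod N3 → ℂ) :
    Fin N1 → Fin N4 → ZMod N3 → ℂ :=
  fun i j => ∑ l : Fin N2, cconv (A i l) (B l j)

/-- Conjugate transpose of a third-order tensor. -/
noncomputable def tConjTranspose {N1 N2 N3 : ℕ}
    (A : Fin N1 → Fin N2 → ZMod N3 → ℂ) : Fin N2 → Fin N1 → ZMod N3 → ℂ :=
  fun i j t => starRingEnd ℂ (A j i (-t))

/-- Identity tensor of size `N × N × N3`. -/
noncomputable def tId (N N3 : ℕ) : Fin N → Fin N → ZMod N3 → ℂ :=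
  fun i j t => if i = j ∧ t = 0 then 1 else 0

/-!
The DFT along the third mode turns circular convolution into multiplication and the tube reversal
`t ↦ conj (a (-t))` into complex conjugation, so slice by slice in the Fourier domain the t-product,
the conjugate transpose and the identity tensor become the matrix product, the conjugate transpose
and the identity matrix. A t-SVD of `T` is therefore obtained by taking a matrix SVD
`U_k Σ_k V_kᴴ` of every Fourier slice of `T` and transforming back; the diagonal of `Σ_k` consists
of the singular values of the slice, which are real, nonnegative and sorted.

The matrix SVD comes from an orthonormal eigenbasis `v` of `MᴴM` with decreasing eigenvalues
`σ_j²`: the vectors `M v_j` are pairwise orthogonal with norms `σ_j`, so the normalized nonzero ones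
extend to an orthonormal basis `u` with `M v_j = σ_j u_j`.
-/

open Matrix Module
open scoped ZMod

section Fourier

variable {n : ℕ} [NeZero n]

theorem dft_eq_zmod_dft : (dft : (ZMod n → ℂ) → ZMod n → ℂ) = 𝓕 := by
  funext a k
  rw [_root_.dft, ZMod.dft_apply]
  refine Finset.sum_congr rfl fun t _ => ?_
  have hcast : -(t * k) = (Int.cast (-((t.val : ℤ) * k.val)) : ZMod n) := by simp
  rw [smul_eq_mul, mul_comm, hcast, ZMod.stdAddChar_coe]
  push_cast
  ring_nf

theorem ZMod.dft_cconv (a b : ZMod n → ℂ) : 𝓕 (cconv a b) = 𝓕 a * 𝓕 b := by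
  funext k
  rw [Pi.mul_apply, ZMod.dft_apply, ZMod.dft_apply, ZMod.dft_apply, Finset.sum_mul_sum]
  simp only [cconv, smul_eq_mul, Finset.mul_sum]
  rw [Finset.sum_comm]
  refine Finset.sum_congr rfl fun s _ => Fintype.sum_equiv (Equiv.subRight s) _ _ fun t => ?_
  rw [Equiv.subRight_apply, show -(t * k) = -(s * k) + -((t - s) * k) by ring,
    AddChar.map_add_eq_mul]
  ring

theorem ZMod.dft_star_comp_neg (a : ZMod n → ℂ) :
    𝓕 (fun t => star (a (-t))) = star (𝓕 a) := by
  funext k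
  simp only [ZMod.dft_apply, Pi.star_apply, star_sum, smul_eq_mul, star_mul']
  refine Fintype.sum_equiv (Equiv.neg _) _ _ fun t => ?_
  rw [Equiv.neg_apply, neg_mul, neg_neg, ← starRingEnd_apply (ZMod.stdAddChar _),
    ← AddChar.map_neg_eq_conj]

theorem ZMod.dft_single_zero_one : 𝓕 (Pi.single (0 : ZMod n) (1 : ℂ)) = 1 := by
  funext k
  simp [ZMod.dft_apply, Pi.single_apply]

end Fourier

section FourierSlices

variable {N1 N2 N3 N4 : ℕ} [NeZero N3]

noncomputable def fourierSlices :
    (Fin N1 → Fin N2 → ZMod N3 → ℂ) ≃ (ZMod N3 → Matrix (Fin N1) (Fin N2) ℂ) where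
  toFun A k := of fun i j => 𝓕 (A i j) k
  invFun M i j := 𝓕⁻ fun k => M k i j
  left_inv A := by ext; simp
  right_inv M := by ext; simp

theorem fourierSlices_apply (A : Fin N1 → Fin N2 → ZMod N3 → ℂ) (k : ZMod N3)
    (i : Fin N1) (j : Fin N2) :
    fourierSlices A k i j = 𝓕 (A i j) k :=
  rfl

theorem fourierSlices_tProduct (A : Fin N1 → Fin N2 → ZMod N3 → ℂ)
    (B : Fin N2 → Fin N4 → ZMod N3 → ℂ) (k : ZMod N3) :
    fourierSlices (tProduct A B) k = fourierSlices A k * fourierSlices B k := by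
  ext i j
  simp [fourierSlices_apply, tProduct, mul_apply, ZMod.dft_cconv]

theorem fourierSlices_tConjTranspose (A : Fin N1 → Fin N2 → ZMod N3 → ℂ) (k : ZMod N3) :
    fourierSlices (tConjTranspose A) k = (fourierSlices A k)ᴴ := by
  ext i j
  exact congrFun (ZMod.dft_star_comp_neg (A j i)) k

theorem fourierSlices_tId (k : ZMod N3) : fourierSlices (tId N1 N3) k = 1 := by
  ext i j
  have h : tId N1 N3 i j = if i = j then Pi.single 0 1 else 0 := by
    ext t; by_cases i = j <;> simp [tId, Pi.single_apply, *]
  rw [fourierSlices_apply, h, one_apply]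
  split_ifs <;> simp [ZMod.dft_single_zero_one]

end FourierSlices

namespace LinearMap

variable {𝕜 E F : Type*} [RCLike 𝕜]
  [NormedAddCommGroup E] [InnerProductSpace 𝕜 E] [FiniteDimensional 𝕜 E]
  [NormedAddCommGroup F] [InnerProductSpace 𝕜 F] [FiniteDimensional 𝕜 F]
  (T : E →ₗ[𝕜] F) {n : ℕ} (hn : finrank 𝕜 E = n)

noncomputable def rightSingularBasis : OrthonormalBasis (Fin n) 𝕜 E :=
  T.isSymmetric_adjoint_comp_self.eigenvectorBasis hn

theorem inner_apply_rightSingularBasis (i j : Fin n) :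
    inner 𝕜 (T (T.rightSingularBasis hn i)) (T (T.rightSingularBasis hn j)) =
      if i = j then ((T.singularValues j ^ 2 : ℝ) : 𝕜) else 0 := by
  rw [← adjoint_inner_right, ← comp_apply, rightSingularBasis,
    T.isSymmetric_adjoint_comp_self.apply_eigenvectorBasis, inner_smul_right,
    orthonormal_iff_ite.mp (OrthonormalBasis.orthonormal _), T.sq_singularValues_fin hn]
  split_ifs <;> simp

theorem apply_rightSingularBasis_eq_zero {j : Fin n} (hj : T.singularValues j = 0) :
    T (T.rightSingularBasis hn j) = 0 := by
  rw [← inner_self_eq_zero (𝕜 := 𝕜), inner_apply_rightSingularBasis, if_pos rfl, hj]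
  simp

theorem exists_orthonormalBasis_apply_rightSingularBasis {m : ℕ} (hm : finrank 𝕜 F = m) :
    ∃ u : OrthonormalBasis (Fin m) 𝕜 F, ∀ (i : Fin m) (j : Fin n), (i : ℕ) = j →
      T (T.rightSingularBasis hn j) = (T.singularValues j : 𝕜) • u i := by
  have hσn : ∀ {i : ℕ}, T.singularValues i ≠ 0 → i < n := fun hi =>
    lt_of_not_ge fun h => hi (T.singularValues_of_finrank_le (hn ▸ h))
  let w : Fin m → F := fun i =>
    if h : (i : ℕ) < n then (T.singularValues i : 𝕜)⁻¹ • T (T.rightSingularBasis hn ⟨i, h⟩) else 0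
  have hw_inner : ∀ i i' : Fin m, T.singularValues i ≠ 0 → T.singularValues i' ≠ 0 →
      inner 𝕜 (w i) (w i') = if i = i' then 1 else 0 := by
    intro i i' hi hi'
    simp only [w, dif_pos (hσn hi), dif_pos (hσn hi'), inner_smul_left, inner_smul_right,
      inner_apply_rightSingularBasis, Fin.mk.injEq, Fin.val_inj]
    split_ifs with h
    · subst h
      have hi𝕜 : (T.singularValues i : 𝕜) ≠ 0 := RCLike.ofReal_ne_zero.mpr hi
      rw [map_inv₀, RCLike.conj_ofReal, RCLike.ofReal_pow]
      field_simp
    · simp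
  have hw_orthonormal : Orthonormal 𝕜 ({i : Fin m | T.singularValues i ≠ 0}.domRestrict w) :=
    orthonormal_iff_ite.mpr fun ⟨i, hi⟩ ⟨i', hi'⟩ => by
      simpa [Subtype.ext_iff] using hw_inner i i' hi hi'
  obtain ⟨u, hu⟩ := hw_orthonormal.exists_orthonormalBasis_extension_of_card_eq (by simp [hm])
  refine ⟨u, fun i j hij => ?_⟩
  by_cases hσ : T.singularValues j = 0
  · rw [hσ, apply_rightSingularBasis_eq_zero T hn hσ]
    simp
  · rw [hu i (by simpa [hij] using hσ)]
    simp only [w, hij, dif_pos j.isLt, smul_smul]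
    rw [mul_inv_cancel₀ (by exact_mod_cast hσ), one_smul]

end LinearMap

namespace Matrix

def rectDiagonal {α : Type*} [Zero α] {m n : ℕ} (d : ℕ → α) : Matrix (Fin m) (Fin n) α :=
  of fun i j => if (i : ℕ) = j then d i else 0

variable {𝕜 : Type*} [RCLike 𝕜] {m n : ℕ}

theorem exists_svd (M : Matrix (Fin m) (Fin n) 𝕜) :
    ∃ U ∈ unitaryGroup (Fin m) 𝕜, ∃ V ∈ unitaryGroup (Fin n) 𝕜,
      M = U * rectDiagonal (m := m) (n := n) (fun i => ((toEuclideanLin M).singularValues i : 𝕜)) *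
        star V := by
  set T := toEuclideanLin M
  set v := T.rightSingularBasis (finrank_euclideanSpace_fin (𝕜 := 𝕜))
  obtain ⟨u, hu⟩ := T.exists_orthonormalBasis_apply_rightSingularBasis
    (finrank_euclideanSpace_fin (𝕜 := 𝕜)) (finrank_euclideanSpace_fin (𝕜 := 𝕜))
  set U := (EuclideanSpace.basisFun (Fin m) 𝕜).toBasis.toMatrix u.toBasis
  set V := (EuclideanSpace.basisFun (Fin n) 𝕜).toBasis.toMatrix v.toBasis
  have hV : V ∈ unitaryGroup (Fin n) 𝕜 :=
    (EuclideanSpace.basisFun (Fin n) 𝕜).toMatrix_orthonormalBasis_mem_unitary v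
  refine ⟨U, (EuclideanSpace.basisFun (Fin m) 𝕜).toMatrix_orthonormalBasis_mem_unitary u,
    V, hV, ?_⟩
  have hMV : M * V = U * rectDiagonal (m := m) (fun i => (T.singularValues i : 𝕜)) := by
    ext r j
    have hcol : (M * V) r j = T (v j) r := by
      simp [T, V, mul_apply, toLpLin_apply, mulVec, dotProduct, Basis.toMatrix_apply]
    rw [hcol, mul_apply]
    by_cases hj : (j : ℕ) < m
    · rw [Finset.sum_eq_single ⟨j, hj⟩, hu ⟨j, hj⟩ j rfl]
      · simp [U, rectDiagonal, Basis.toMatrix_apply, RCLike.real_smul_eq_coe_mul, mul_comm]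
      · intro i _ hi
        simp [rectDiagonal, Fin.val_ne_of_ne hi]
      · simp
    · have hσ : T.singularValues j = 0 := by
        rw [T.singularValues_eq_zero_iff_le_finrank_range]
        exact (Submodule.finrank_le _).trans (by simpa using hj)
      rw [T.apply_rightSingularBasis_eq_zero _ hσ]
      refine (Finset.sum_eq_zero fun i _ => ?_).symm
      simp [rectDiagonal, show (i : ℕ) ≠ j by omega]
  calc M = M * V * star V := by
        rw [Matrix.mul_assoc, mem_unitaryGroup_iff.mp hV, Matrix.mul_one]
    _ = _ := by rw [hMV]

end Matrix

section UnitaryTensor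

variable {N N3 : ℕ} [NeZero N3] {U : Fin N → Fin N → ZMod N3 → ℂ}

theorem tConjTranspose_tProduct_self_of_unitary
    (hU : ∀ k, fourierSlices U k ∈ unitaryGroup (Fin N) ℂ) :
    tProduct (tConjTranspose U) U = tId N N3 :=
  fourierSlices.injective <| funext fun k => by
    rw [fourierSlices_tProduct, fourierSlices_tConjTranspose, fourierSlices_tId,
      ← star_eq_conjTranspose, mem_unitaryGroup_iff'.mp (hU k)]

theorem tProduct_tConjTranspose_self_of_unitary
    (hU : ∀ k, fourierSlices U k ∈ unitaryGroup (Fin N) ℂ) :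
    tProduct U (tConjTranspose U) = tId N N3 :=
  fourierSlices.injective <| funext fun k => by
    rw [fourierSlices_tProduct, fourierSlices_tConjTranspose, fourierSlices_tId,
      ← star_eq_conjTranspose, mem_unitaryGroup_iff.mp (hU k)]

end UnitaryTensor

/-- existence of the t-SVD with nonnegative, nonincreasing singular
tubes in the Fourier domain. -/
theorem stmt3 (N1 N2 N3 : ℕ) [NeZero N3]
    (T : Fin N1 → Fin N2 → ZMod N3 → ℂ) :
    ∃ (U : Fin N1 → Fin N1 → ZMod N3 → ℂ)
      (Θ : Fin N1 → Fin N2 → ZMod N3 → ℂ)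
      (V : Fin N2 → Fin N2 → ZMod N3 → ℂ),
      tProduct (tConjTranspose U) U = tId N1 N3 ∧
      tProduct U (tConjTranspose U) = tId N1 N3 ∧
      tProduct (tConjTranspose V) V = tId N2 N3 ∧
      tProduct V (tConjTranspose V) = tId N2 N3 ∧
      (∀ (i : Fin N1) (j : Fin N2), (i : ℕ) ≠ (j : ℕ) → Θ i j = 0) ∧
      T = tProduct U (tProduct Θ (tConjTranspose V)) ∧
      (∀ (k : ZMod N3) (i : Fin N1) (j : Fin N2), (i : ℕ) = (j : ℕ) →
        (dft (Θ i j) k).im = 0 ∧ 0 ≤ (dft (Θ i j) k).re) ∧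
      (∀ (k : ZMod N3) (i i' : Fin N1) (j j' : Fin N2),
        (i : ℕ) = (j : ℕ) → (i' : ℕ) = (j' : ℕ) → (i : ℕ) ≤ (i' : ℕ) →
        (dft (Θ i' j') k).re ≤ (dft (Θ i j) k).re) := by
  choose U hU V hV hsvd using fun k => exists_svd (fourierSlices T k)
  let σ k := (toEuclideanLin (fourierSlices T k)).singularValues
  let Θ : Fin N1 → Fin N2 → ZMod N3 → ℂ :=
    fourierSlices.symm fun k => rectDiagonal fun i => (σ k i : ℂ)
  have hΘ (k : ZMod N3) (i : Fin N1) (j : Fin N2) :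
      𝓕 (Θ i j) k = if (i : ℕ) = j then (σ k i : ℂ) else 0 := by
    rw [← fourierSlices_apply, Equiv.apply_symm_apply]
    rfl
  refine ⟨fourierSlices.symm U, Θ, fourierSlices.symm V, ?_, ?_, ?_, ?_, ?_, ?_, ?_, ?_⟩
  · exact tConjTranspose_tProduct_self_of_unitary (by simpa using hU)
  · exact tProduct_tConjTranspose_self_of_unitary (by simpa using hU)
  · exact tConjTranspose_tProduct_self_of_unitary (by simpa using hV)
  · exact tProduct_tConjTranspose_self_of_unitary (by simpa using hV)
  · intro i j hij
    refine ZMod.dft.injective (funext fun k => ?_)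
    rw [hΘ, if_neg hij, map_zero, Pi.zero_apply]
  · refine fourierSlices.injective (funext fun k => ?_)
    simp only [fourierSlices_tProduct, fourierSlices_tConjTranspose, Θ, Equiv.apply_symm_apply,
      ← star_eq_conjTranspose, ← Matrix.mul_assoc]
    exact hsvd k
  · intro k i j hij
    simpa [dft_eq_zmod_dft, hΘ, hij] using LinearMap.singularValues_nonneg _ _
  · intro k i i' j j' hij hij' hii'
    simp only [dft_eq_zmod_dft, hΘ, hij, hij', if_true, Complex.ofReal_re]
    exact LinearMap.singularValues_antitone _ (by omega)
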